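/- arXiv:0708.3901 — 6 statements merged into one kernel-verified Lean document; each statement's English description precedes it below -/
import Mathlib

section
/- Let f : Y → X be a set map, let F ⊆ Y × Y satisfy the properness axiom, and put E := (f × f)(F). The following are equivalent: (i) f is locally proper for F; (ii) the restrictions of f to the left support F·Y and to the right support Y·F are proper maps; (iii) for every finite subset S ⊆ X, the sets f⁻¹(S)·F and F·f⁻¹(S) are finite. -/
open Set

universe u v w

/-- `E ⊆ X × X` satisfies the properness axiom: for every finite `K ⊆ X`,
the sets `{e ∈ E | e.1 ∈ K}` and `{e ∈ E | e.2 ∈ K}` are finite. -/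
def ProperAx {X : Type u} (E : Set (X × X)) : Prop :=
  ∀ K : Set X, K.Finite → {e ∈ E | e.1 ∈ K}.Finite ∧ {e ∈ E | e.2 ∈ K}.Finite

/-- Composition of relations: `E ∘ E' = {(x, x'') : ∃ x', (x, x') ∈ E ∧ (x', x'') ∈ E'}`. -/
def rcomp {X : Type u} (E E' : Set (X × X)) : Set (X × X) :=
  {p | ∃ x', (p.1, x') ∈ E ∧ (x', p.2) ∈ E'}

/-- Transpose of a relation. -/
def rtrans {X : Type u} (E : Set (X × X)) : Set (X × X) :=
  {p | (p.2, p.1) ∈ E}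

/-- Local unit over `S`: the diagonal `{(x, x) : x ∈ S}`. -/
def runit {X : Type u} (S : Set X) : Set (X × X) :=
  {p | p.1 ∈ S ∧ p.1 = p.2}

/-- A set map is proper if the preimage of every finite subset is finite. -/
def ProperMap {Y : Type u} {X : Type v} (f : Y → X) : Prop :=
  ∀ K : Set X, K.Finite → (f ⁻¹' K).Finite

/-- `f` is locally proper for `F ⊆ Y × Y`: `(f × f)(F)` satisfies the properness
axiom and the restriction of `f × f` to `F` is a proper map into `X × X`. -/
def LocProperFor {Y : Type u} {X : Type v} (f : Y → X) (F : Set (Y × Y)) : Prop :=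
  ProperAx (Prod.map f f '' F) ∧
  ∀ K : Set (X × X), K.Finite → {p ∈ F | Prod.map f f p ∈ K}.Finite

/-- A coarse structure on `X`. -/
structure CoarseStructure (X : Type u) where
  ents : Set (Set (X × X))
  proper : ∀ E ∈ ents, ProperAx E
  union_mem : ∀ E ∈ ents, ∀ E' ∈ ents, E ∪ E' ∈ ents
  comp_mem : ∀ E ∈ ents, ∀ E' ∈ ents, rcomp E E' ∈ ents
  trans_mem : ∀ E ∈ ents, rtrans E ∈ ents
  subset_mem : ∀ E ∈ ents, ∀ E' ⊆ E, E' ∈ ents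
  singleton_mem : ∀ x : X, ({(x, x)} : Set (X × X)) ∈ ents

/-- A coarse map: locally proper for every entourage of the domain, and
preserves entourages. -/
def IsCoarseMap {Y : Type u} {X : Type v} (CY : CoarseStructure Y) (CX : CoarseStructure X)
    (f : Y → X) : Prop :=
  ∀ F ∈ CY.ents, LocProperFor f F ∧ Prod.map f f '' F ∈ CX.ents

/-- `(f × f')(F) = {(f y, f' y') : (y, y') ∈ F}`. -/
def prodImage {Y : Type u} {X : Type v} (f f' : Y → X) (F : Set (Y × Y)) : Set (X × X) :=
  (fun p => (f p.1, f' p.2)) '' F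

/-- Coarse maps `f, f'` are close if `(f × f')(F)` is an entourage of the codomain
for every entourage `F` of the domain. -/
def Close {Y : Type u} {X : Type v} (CY : CoarseStructure Y) (CX : CoarseStructure X)
    (f f' : Y → X) : Prop :=
  ∀ F ∈ CY.ents, prodImage f f' F ∈ CX.ents

/-- Left support `F·Y`. -/
def leftSupp {Y : Type u} (F : Set (Y × Y)) : Set Y := Prod.fst '' F

/-- Right support `Y·F`. -/
def rightSupp {Y : Type u} (F : Set (Y × Y)) : Set Y := Prod.snd '' F

/-- Left `F`-neighbourhood `F·S`. -/
def leftNbhd {Y : Type u} (F : Set (Y × Y)) (S : Set Y) : Set Y := {y | ∃ y' ∈ S, (y, y') ∈ F}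

/-- Right `F`-neighbourhood `S·F`. -/
def rightNbhd {Y : Type u} (S : Set Y) (F : Set (Y × Y)) : Set Y := {y' | ∃ y ∈ S, (y, y') ∈ F}

/-!
All three conditions are equivalent to the finiteness, for every finite `K ⊆ X`, of
`{(y, y') ∈ F : f y ∈ K}` and `{(y, y') ∈ F : f y' ∈ K}`. For (i) this is bookkeeping with
images and preimages under `f × f`. For (ii) and (iii), the first set projects onto `F·Y ∩ f⁻¹(K)` and onto `f⁻¹(K)·F`, and the
properness axiom of `F` shows conversely that the set is finite as soon as either
projection is; symmetrically for the second.
-/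

section Supports

variable {Y : Type u}

theorem rightNbhd_eq_image_snd (S : Set Y) (F : Set (Y × Y)) :
    rightNbhd S F = Prod.snd '' {p ∈ F | p.1 ∈ S} := by
  ext y'
  constructor
  · rintro ⟨y, hy, hyF⟩
    exact ⟨(y, y'), ⟨hyF, hy⟩, rfl⟩
  · rintro ⟨p, ⟨hpF, hp⟩, rfl⟩
    exact ⟨p.1, hp, hpF⟩

theorem leftNbhd_eq_image_fst (F : Set (Y × Y)) (S : Set Y) :
    leftNbhd F S = Prod.fst '' {p ∈ F | p.2 ∈ S} := by
  ext y
  constructor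
  · rintro ⟨y', hy', hyF⟩
    exact ⟨(y, y'), ⟨hyF, hy'⟩, rfl⟩
  · rintro ⟨p, ⟨hpF, hp⟩, rfl⟩
    exact ⟨p.2, hp, hpF⟩

namespace ProperAx

variable {F : Set (Y × Y)}

theorem finite_fst_mem_iff_leftSupp (hF : ProperAx F) (S : Set Y) :
    {p ∈ F | p.1 ∈ S}.Finite ↔ {y ∈ leftSupp F | y ∈ S}.Finite :=
  ⟨fun h => (h.image Prod.fst).subset (image_inter_preimage Prod.fst F S).ge,
    fun h => (hF _ h).1.subset fun p hp => ⟨hp.1, ⟨p, hp.1, rfl⟩, hp.2⟩⟩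

theorem finite_snd_mem_iff_rightSupp (hF : ProperAx F) (S : Set Y) :
    {p ∈ F | p.2 ∈ S}.Finite ↔ {y ∈ rightSupp F | y ∈ S}.Finite :=
  ⟨fun h => (h.image Prod.snd).subset (image_inter_preimage Prod.snd F S).ge,
    fun h => (hF _ h).2.subset fun p hp => ⟨hp.1, ⟨p, hp.1, rfl⟩, hp.2⟩⟩

theorem finite_fst_mem_iff_rightNbhd (hF : ProperAx F) (S : Set Y) :
    {p ∈ F | p.1 ∈ S}.Finite ↔ (rightNbhd S F).Finite :=
  ⟨fun h => rightNbhd_eq_image_snd S F ▸ h.image Prod.snd,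
    fun h => (hF _ h).2.subset fun p hp => ⟨hp.1, p.1, hp.2, hp.1⟩⟩

theorem finite_snd_mem_iff_leftNbhd (hF : ProperAx F) (S : Set Y) :
    {p ∈ F | p.2 ∈ S}.Finite ↔ (leftNbhd F S).Finite :=
  ⟨fun h => leftNbhd_eq_image_fst F S ▸ h.image Prod.fst,
    fun h => (hF _ h).1.subset fun p hp => ⟨hp.1, p.2, hp.2, hp.1⟩⟩

end ProperAx

end Supports

section LocProper

variable {Y : Type u} {X : Type v} {f : Y → X} {F : Set (Y × Y)}

theorem LocProperFor.finite_sep (hf : LocProperFor f F) {K : Set X} (hK : K.Finite) :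
    {p ∈ F | f p.1 ∈ K}.Finite ∧ {p ∈ F | f p.2 ∈ K}.Finite := by
  obtain ⟨hE, hP⟩ := hf
  exact ⟨(hP _ (hE K hK).1).subset fun p hp => ⟨hp.1, mem_image_of_mem _ hp.1, hp.2⟩,
    (hP _ (hE K hK).2).subset fun p hp => ⟨hp.1, mem_image_of_mem _ hp.1, hp.2⟩⟩

theorem locProperFor_of_finite_sep
    (h : ∀ K : Set X, K.Finite → {p ∈ F | f p.1 ∈ K}.Finite ∧ {p ∈ F | f p.2 ∈ K}.Finite) :
    LocProperFor f F := by
  refine ⟨fun K hK => ⟨?_, ?_⟩, fun K hK => ?_⟩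
  · refine ((h K hK).1.image (Prod.map f f)).subset ?_
    rintro _ ⟨⟨p, hp, rfl⟩, he⟩
    exact ⟨p, ⟨hp, he⟩, rfl⟩
  · refine ((h K hK).2.image (Prod.map f f)).subset ?_
    rintro _ ⟨⟨p, hp, rfl⟩, he⟩
    exact ⟨p, ⟨hp, he⟩, rfl⟩
  · exact (h _ (hK.image Prod.fst)).1.subset fun p hp => ⟨hp.1, _, hp.2, rfl⟩

theorem locProperFor_iff_finite_sep :
    LocProperFor f F ↔
      ∀ K : Set X, K.Finite → {p ∈ F | f p.1 ∈ K}.Finite ∧ {p ∈ F | f p.2 ∈ K}.Finite :=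
  ⟨fun hf _ hK => hf.finite_sep hK, locProperFor_of_finite_sep⟩

end LocProper

/-- For a set map `f : Y → X` and `F ⊆ Y × Y` satisfying the properness axiom,
local properness for `F` is equivalent to: (ii) the restrictions of `f` to the left
and right supports of `F` are proper; and to (iii) `f⁻¹(S)·F` and `F·f⁻¹(S)` are
finite for every finite `S ⊆ X`. -/
theorem stmt2 {Y : Type u} {X : Type v} (f : Y → X) (F : Set (Y × Y)) (hF : ProperAx F) :
    (LocProperFor f F ↔
      ∀ K : Set X, K.Finite →
        {y ∈ leftSupp F | f y ∈ K}.Finite ∧ {y ∈ rightSupp F | f y ∈ K}.Finite) ∧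
    (LocProperFor f F ↔
      ∀ S : Set X, S.Finite →
        (rightNbhd (f ⁻¹' S) F).Finite ∧ (leftNbhd F (f ⁻¹' S)).Finite) := by
  refine ⟨locProperFor_iff_finite_sep.trans (forall₂_congr fun K _ => ?_),
    locProperFor_iff_finite_sep.trans (forall₂_congr fun S _ => ?_)⟩
  · exact and_congr (hF.finite_fst_mem_iff_leftSupp (f ⁻¹' K))
      (hF.finite_snd_mem_iff_rightSupp (f ⁻¹' K))
  · exact and_congr (hF.finite_fst_mem_iff_rightNbhd (f ⁻¹' S))
      (hF.finite_snd_mem_iff_leftNbhd (f ⁻¹' S))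
end

section
/- Consider set maps g : Z → Y and f : Y → X, let G ⊆ Z × Z satisfy the properness axiom, and put F := (g × g)(G). Then: (i) if g is locally proper for G and f is locally proper for F, then f ∘ g is locally proper for G; (ii) if f ∘ g is locally proper for G, then g is locally proper for G; (iii) if f ∘ g is locally proper for G, then f is locally proper for F. -/
open Set

universe u v w

/-!
The maps `(f × f) ∘ (g × g)` and `(f ∘ g) × (f ∘ g)` agree, so all three parts come down to
inclusions between fibres of these maps over `G` and `(g × g)(G)`. The properness axiom for
`(g × g)(G)` in (ii) comes from (iii): if `f` is locally proper for `F`, then `F` itself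
satisfies the properness axiom, because the pairs of `F` with an entry in `K` are among those
whose image under `f × f` has an entry in `f(K)`.
-/

section LocProperFor

variable {Z : Type u} {Y : Type v} {X : Type w} {g : Z → Y} {f : Y → X} {G : Set (Z × Z)}

theorem image_prodMap_image_prodMap (g : Z → Y) (f : Y → X) (G : Set (Z × Z)) :
    Prod.map f f '' (Prod.map g g '' G) = Prod.map (f ∘ g) (f ∘ g) '' G :=
  image_image ..

theorem LocProperFor.properAx {F : Set (Y × Y)} (hf : LocProperFor f F) : ProperAx F := by
  intro K hK
  obtain ⟨hfst, hsnd⟩ := hf.1 (f '' K) (hK.image f)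
  refine ⟨(hf.2 _ hfst).subset ?_, (hf.2 _ hsnd).subset ?_⟩ <;>
    rintro p ⟨hpF, hpK⟩ <;> exact ⟨hpF, mem_image_of_mem _ hpF, mem_image_of_mem f hpK⟩

theorem LocProperFor.comp (hf : LocProperFor f (Prod.map g g '' G)) (hg : LocProperFor g G) :
    LocProperFor (f ∘ g) G := by
  refine ⟨image_prodMap_image_prodMap g f G ▸ hf.1, fun K hK => (hg.2 _ (hf.2 K hK)).subset ?_⟩
  rintro p ⟨hpG, hpK⟩
  exact ⟨hpG, mem_image_of_mem _ hpG, hpK⟩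

theorem LocProperFor.image_of_comp (h : LocProperFor (f ∘ g) G) :
    LocProperFor f (Prod.map g g '' G) := by
  refine ⟨(image_prodMap_image_prodMap g f G).symm ▸ h.1,
    fun K hK => ((h.2 K hK).image (Prod.map g g)).subset ?_⟩
  rintro _ ⟨⟨p, hpG, rfl⟩, hpK⟩
  exact ⟨p, ⟨hpG, hpK⟩, rfl⟩

theorem LocProperFor.of_comp (h : LocProperFor (f ∘ g) G) : LocProperFor g G := by
  refine ⟨h.image_of_comp.properAx, fun K hK => (h.2 _ (hK.image (Prod.map f f))).subset ?_⟩
  rintro p ⟨hpG, hpK⟩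
  exact ⟨hpG, mem_image_of_mem (Prod.map f f) hpK⟩

end LocProperFor

theorem stmt6_general {Z : Type u} {Y : Type v} {X : Type w} (g : Z → Y) (f : Y → X)
    (G : Set (Z × Z)) :
    (LocProperFor g G → LocProperFor f (Prod.map g g '' G) → LocProperFor (f ∘ g) G) ∧
    (LocProperFor (f ∘ g) G → LocProperFor g G) ∧
    (LocProperFor (f ∘ g) G → LocProperFor f (Prod.map g g '' G)) :=
  ⟨fun hg hf => hf.comp hg, LocProperFor.of_comp, LocProperFor.image_of_comp⟩

/-- Local properness and composition: with `F := (g × g)(G)`, (i) if `g` is locally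
proper for `G` and `f` for `F`, then `f ∘ g` is locally proper for `G`; (ii) if
`f ∘ g` is locally proper for `G` then so is `g`; (iii) if `f ∘ g` is locally
proper for `G` then `f` is locally proper for `F`. -/
theorem stmt6 {Z : Type u} {Y : Type v} {X : Type w} (g : Z → Y) (f : Y → X)
    (G : Set (Z × Z)) (hG : ProperAx G) :
    (LocProperFor g G → LocProperFor f (Prod.map g g '' G) → LocProperFor (f ∘ g) G) ∧
    (LocProperFor (f ∘ g) G → LocProperFor g G) ∧
    (LocProperFor (f ∘ g) G → LocProperFor f (Prod.map g g '' G)) :=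
  stmt6_general g f G
end

section
/- Let J be a nonempty index set and (X_j)_{j ∈ J} a family of coarse spaces. Let P := Π_{j ∈ J} X_j be the product set, and let 𝓔_P be the collection of all E ⊆ P × P satisfying the properness axiom such that for every j ∈ J the projection π_j : P → X_j is locally proper for E and (π_j × π_j)(E) is an entourage of X_j. Then 𝓔_P is a coarse structure on P, each projection π_j is a coarse map, and for every coarse space Y and every family of coarse maps f_j : Y → X_j (j ∈ J), the induced map t : Y → P defined by t(y) := (f_j(y))_{j ∈ J} is a coarse map (and is the unique map with π_j ∘ t = f_j for all j). -/
open Set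

universe u v w

/-- The entourages of the product coarse space: sets satisfying the properness axiom
for which every projection is locally proper and preserves them. -/
def prodEnts {J : Type u} {X : J → Type v} (C : ∀ j, CoarseStructure (X j)) :
    Set (Set ((∀ j, X j) × (∀ j, X j))) :=
  {E | ProperAx E ∧ ∀ j : J,
    LocProperFor (fun p : (∀ i, X i) => p j) E ∧
    Prod.map (fun p : (∀ i, X i) => p j) (fun p : (∀ i, X i) => p j) '' E ∈ (C j).ents}

/-!
Everything reduces to one finiteness notion: `f` is locally proper for `F` exactly when, over
each finite `K`, only finitely many pairs of `F` have an `f`-image with a coordinate in `K`;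
the properness axiom is the case `f = id`. This notion is stable under the coarse-structure
operations, which makes `prodEnts C` a coarse structure, and it passes from `g ∘ f` to `f`.
Since `π_j ∘ t = f_j`, any single index `j₀` transfers local properness from `f_{j₀}` to
the induced map `t`, and `(π_j × π_j) ∘ (t × t) = f_j × f_j` gives the remaining conditions.
-/

def ProperAlong {Y : Type u} {X : Type v} (f : Y → X) (F : Set (Y × Y)) : Prop :=
  ∀ K : Set X, K.Finite → {p ∈ F | f p.1 ∈ K}.Finite ∧ {p ∈ F | f p.2 ∈ K}.Finite

section ProperAlong

variable {Z : Type w} {Y : Type u} {X : Type v} {f : Y → X} {E F : Set (Y × Y)}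

theorem properAlong_id_iff {E : Set (X × X)} : ProperAlong id E ↔ ProperAx E := Iff.rfl

theorem ProperAlong.mono (hF : ProperAlong f F) (hEF : E ⊆ F) : ProperAlong f E :=
  fun K hK => ⟨(hF K hK).1.subset fun _ hp => ⟨hEF hp.1, hp.2⟩,
    (hF K hK).2.subset fun _ hp => ⟨hEF hp.1, hp.2⟩⟩

theorem Set.Finite.properAlong (hF : F.Finite) : ProperAlong f F :=
  fun _ _ => ⟨hF.subset fun _ hp => hp.1, hF.subset fun _ hp => hp.1⟩

theorem ProperAlong.union (hE : ProperAlong f E) (hF : ProperAlong f F) :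
    ProperAlong f (E ∪ F) := by
  intro K hK
  constructor
  · refine ((hE K hK).1.union (hF K hK).1).subset ?_
    rintro p ⟨hp | hp, hk⟩
    exacts [Or.inl ⟨hp, hk⟩, Or.inr ⟨hp, hk⟩]
  · refine ((hE K hK).2.union (hF K hK).2).subset ?_
    rintro p ⟨hp | hp, hk⟩
    exacts [Or.inl ⟨hp, hk⟩, Or.inr ⟨hp, hk⟩]

theorem ProperAlong.rtrans (hF : ProperAlong f F) : ProperAlong f (rtrans F) := by
  intro K hK
  constructor
  · refine ((hF K hK).2.image Prod.swap).subset ?_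
    rintro ⟨y, y'⟩ hp
    exact ⟨(y', y), hp, rfl⟩
  · refine ((hF K hK).1.image Prod.swap).subset ?_
    rintro ⟨y, y'⟩ hp
    exact ⟨(y', y), hp, rfl⟩

/-- A pair of `rcomp E F` over `K` is glued from a pair of `E` over `K` and a pair of `F`
over the finitely many middle points that the first can reach. -/
theorem ProperAlong.rcomp (hE : ProperAlong f E) (hF : ProperAlong f F) :
    ProperAlong f (rcomp E F) := by
  intro K hK
  constructor
  · have hA := (hE K hK).1
    have hB := (hF _ ((hA.image Prod.snd).image f)).1
    refine ((hA.prod hB).image fun q : (Y × Y) × (Y × Y) => (q.1.1, q.2.2)).subset ?_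
    rintro ⟨y, y''⟩ ⟨⟨y', h₁, h₂⟩, hk⟩
    have hy' : f y' ∈ f '' (Prod.snd '' {p ∈ E | f p.1 ∈ K}) :=
      ⟨y', ⟨_, ⟨h₁, hk⟩, rfl⟩, rfl⟩
    exact ⟨((y, y'), (y', y'')), ⟨⟨h₁, hk⟩, h₂, hy'⟩, rfl⟩
  · have hA := (hF K hK).2
    have hB := (hE _ ((hA.image Prod.fst).image f)).2
    refine ((hB.prod hA).image fun q : (Y × Y) × (Y × Y) => (q.1.1, q.2.2)).subset ?_
    rintro ⟨y, y''⟩ ⟨⟨y', h₁, h₂⟩, hk⟩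
    have hy' : f y' ∈ f '' (Prod.fst '' {p ∈ F | f p.2 ∈ K}) :=
      ⟨y', ⟨_, ⟨h₂, hk⟩, rfl⟩, rfl⟩
    exact ⟨((y, y'), (y', y'')), ⟨⟨h₁, hy'⟩, h₂, hk⟩, rfl⟩

theorem ProperAlong.of_comp {g : X → Z} (hF : ProperAlong (g ∘ f) F) : ProperAlong f F :=
  fun _ hK => ⟨(hF _ (hK.image g)).1.subset fun _ hp => ⟨hp.1, _, hp.2, rfl⟩,
    (hF _ (hK.image g)).2.subset fun _ hp => ⟨hp.1, _, hp.2, rfl⟩⟩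

theorem ProperAlong.image {g : X → Z} (hF : ProperAlong (g ∘ f) F) :
    ProperAlong g (Prod.map f f '' F) := by
  intro K hK
  constructor
  · refine ((hF K hK).1.image (Prod.map f f)).subset ?_
    rintro _ ⟨⟨p, hp, rfl⟩, hk⟩
    exact ⟨p, ⟨hp, hk⟩, rfl⟩
  · refine ((hF K hK).2.image (Prod.map f f)).subset ?_
    rintro _ ⟨⟨p, hp, rfl⟩, hk⟩
    exact ⟨p, ⟨hp, hk⟩, rfl⟩

theorem locProperFor_iff_properAlong : LocProperFor f F ↔ ProperAlong f F := by
  constructor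
  · rintro ⟨hAx, hFin⟩ K hK
    have h₁ := hFin _ (hAx K hK).1
    have h₂ := hFin _ (hAx K hK).2
    exact ⟨h₁.subset fun p hp => ⟨hp.1, ⟨p, hp.1, rfl⟩, hp.2⟩,
      h₂.subset fun p hp => ⟨hp.1, ⟨p, hp.1, rfl⟩, hp.2⟩⟩
  · intro hF
    refine ⟨ProperAlong.image (g := id) hF, fun K hK => ?_⟩
    exact (hF _ (hK.image Prod.fst)).1.subset fun p hp => ⟨hp.1, _, hp.2, rfl⟩

end ProperAlong

theorem image_rcomp_subset {Y : Type u} {X : Type v} (f : Y → X) (E F : Set (Y × Y)) :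
    Prod.map f f '' rcomp E F ⊆ rcomp (Prod.map f f '' E) (Prod.map f f '' F) := by
  rintro _ ⟨⟨y, y''⟩, ⟨y', h₁, h₂⟩, rfl⟩
  exact ⟨f y', ⟨(y, y'), h₁, rfl⟩, ⟨(y', y''), h₂, rfl⟩⟩

theorem image_rtrans {Y : Type u} {X : Type v} (f : Y → X) (F : Set (Y × Y)) :
    Prod.map f f '' rtrans F = rtrans (Prod.map f f '' F) := by
  ext ⟨x, x'⟩
  constructor
  · rintro ⟨⟨y, y'⟩, hp, h⟩
    obtain ⟨rfl, rfl⟩ := Prod.mk.inj h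
    exact ⟨(y', y), hp, rfl⟩
  · rintro ⟨⟨y', y⟩, hp, h⟩
    obtain ⟨rfl, rfl⟩ := Prod.mk.inj h
    exact ⟨(y, y'), hp, rfl⟩

section Product

variable {J : Type u} {X : J → Type v} (C : ∀ j, CoarseStructure (X j))

theorem mem_prodEnts_iff {E : Set ((∀ j, X j) × (∀ j, X j))} :
    E ∈ prodEnts C ↔ ProperAlong id E ∧
      ∀ j : J, ProperAlong (fun p : ∀ i, X i => p j) E ∧
      Prod.map (fun p : ∀ i, X i => p j) (fun p : ∀ i, X i => p j) '' E ∈ (C j).ents := by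
  simp only [prodEnts, Set.mem_ofPred_eq, locProperFor_iff_properAlong, properAlong_id_iff]

def prodCoarseStructure : CoarseStructure (∀ j, X j) where
  ents := prodEnts C
  proper _ hE := hE.1
  union_mem E hE F hF := by
    rw [mem_prodEnts_iff] at hE hF ⊢
    refine ⟨hE.1.union hF.1, fun j => ⟨(hE.2 j).1.union (hF.2 j).1, ?_⟩⟩
    rw [Set.image_union]
    exact (C j).union_mem _ (hE.2 j).2 _ (hF.2 j).2
  comp_mem E hE F hF := by
    rw [mem_prodEnts_iff] at hE hF ⊢
    exact ⟨hE.1.rcomp hF.1, fun j => ⟨(hE.2 j).1.rcomp (hF.2 j).1,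
      (C j).subset_mem _ ((C j).comp_mem _ (hE.2 j).2 _ (hF.2 j).2) _
        (image_rcomp_subset _ _ _)⟩⟩
  trans_mem E hE := by
    rw [mem_prodEnts_iff] at hE ⊢
    refine ⟨hE.1.rtrans, fun j => ⟨(hE.2 j).1.rtrans, ?_⟩⟩
    rw [image_rtrans]
    exact (C j).trans_mem _ (hE.2 j).2
  subset_mem E hE F hFE := by
    rw [mem_prodEnts_iff] at hE ⊢
    exact ⟨hE.1.mono hFE, fun j => ⟨(hE.2 j).1.mono hFE,
      (C j).subset_mem _ (hE.2 j).2 _ (Set.image_mono hFE)⟩⟩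
  singleton_mem p := by
    rw [mem_prodEnts_iff]
    have hfin : ({(p, p)} : Set ((∀ j, X j) × (∀ j, X j))).Finite := Set.finite_singleton _
    refine ⟨hfin.properAlong, fun j => ⟨hfin.properAlong, ?_⟩⟩
    rw [Set.image_singleton]
    exact (C j).singleton_mem (p j)

theorem isCoarseMap_eval (j : J) :
    IsCoarseMap (prodCoarseStructure C) (C j) (fun p => p j) :=
  fun _ hE => hE.2 j

theorem isCoarseMap_pi [Nonempty J] {Y : Type w} (CY : CoarseStructure Y) {f : ∀ j, Y → X j}
    (hf : ∀ j, IsCoarseMap CY (C j) (f j)) :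
    IsCoarseMap CY (prodCoarseStructure C) (fun y j => f j y) := by
  intro F hF
  obtain ⟨j₀⟩ := ‹Nonempty J›
  have hfF (j : J) : ProperAlong (f j) F := locProperFor_iff_properAlong.1 (hf j F hF).1
  have htF : ProperAlong (fun y j => f j y) F :=
    ProperAlong.of_comp (g := fun p => p j₀) (hfF j₀)
  have himage (j : J) : Prod.map (fun p : ∀ i, X i => p j) (fun p : ∀ i, X i => p j) ''
      (Prod.map (fun y j => f j y) (fun y j => f j y) '' F) = Prod.map (f j) (f j) '' F := by
    rw [Set.image_image]
    rfl
  refine ⟨locProperFor_iff_properAlong.2 htF, (mem_prodEnts_iff C).2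
    ⟨ProperAlong.image (g := id) htF,
      fun j => ⟨ProperAlong.image (f := fun y j => f j y) (hfF j), ?_⟩⟩⟩
  rw [himage]
  exact (hf j F hF).2

end Product

/-- For a nonempty family of coarse spaces, the product set with `prodEnts` is a
coarse structure, the projections are coarse maps, and the induced map from any
cone of coarse maps is the unique coarse map commuting with the projections. -/
theorem stmt14 {J : Type u} [Nonempty J] {X : J → Type v}
    (C : ∀ j, CoarseStructure (X j)) :
    ∃ CP : CoarseStructure (∀ j, X j), CP.ents = prodEnts C ∧
      (∀ j : J, IsCoarseMap CP (C j) (fun p => p j)) ∧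
      ∀ (Y : Type w) (CY : CoarseStructure Y) (f : ∀ j, Y → X j),
        (∀ j, IsCoarseMap CY (C j) (f j)) →
        IsCoarseMap CY CP (fun y j => f j y) ∧
        ∀ t' : Y → (∀ j, X j), (∀ j, (fun p : (∀ i, X i) => p j) ∘ t' = f j) →
          t' = fun y j => f j y :=
  ⟨prodCoarseStructure C, rfl, isCoarseMap_eval C, fun _ CY _ hf =>
    ⟨isCoarseMap_pi C CY hf, fun _ ht => funext fun y => funext fun j => congrFun (ht j) y⟩⟩
end

section
/- Let J be a nonempty index set, (X_j)_{j ∈ J} coarse spaces, and P := Π_{j ∈ J} X_j the product coarse space whose entourages are the E ⊆ P × P satisfying the properness axiom such that for every j the projection π_j is locally proper for E and (π_j × π_j)(E) is an entourage of X_j. Let Y be a coarse space, f_j : Y → X_j coarse maps, and t : Y → P the induced coarse map t(y) := (f_j(y))_j. If t' : Y → P is any coarse map such that π_j ∘ t' is close to f_j for every j ∈ J, then t' is close to t. (Hence P with the classes of the projections is a product in the coarse category.) -/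
open Set

universe u v w

/-! The `j`-th projection of `(t' × t)(F)` is `(π_j ∘ t' × f_j)(F)`, an entourage by closeness.
The finiteness conditions on `(t' × t)(F)` involve only one side of `F` at a time, so they follow
from the properness axiom for `F` once the relevant side is known to be finite: the coarse maps
`t'`, `t` and `π_j ∘ t'` are locally proper on the diagonal over the supports of `F`, which is an
entourage since it is contained in `F ∘ Fᵀ` resp. `Fᵀ ∘ F`. -/

section

variable {Y : Type*} {X : Type*} {Z : Type*}
  {CY : CoarseStructure Y} {CX : CoarseStructure X} {CZ : CoarseStructure Z}

theorem IsCoarseMap.comp {g : X → Z} {f : Y → X} (hg : IsCoarseMap CX CZ g)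
    (hf : IsCoarseMap CY CX f) : IsCoarseMap CY CZ (g ∘ f) := by
  intro F hF
  obtain ⟨⟨-, hfK⟩, hfE⟩ := hf F hF
  obtain ⟨⟨hgP, hgK⟩, hgE⟩ := hg _ hfE
  have himage : Prod.map (g ∘ f) (g ∘ f) '' F = Prod.map g g '' (Prod.map f f '' F) := by
    rw [← Prod.map_comp_map, image_comp]
  refine ⟨⟨himage ▸ hgP, fun K hK => (hfK _ (hgK K hK)).subset ?_⟩, himage ▸ hgE⟩
  rintro p ⟨hp, hpK⟩
  exact ⟨hp, mem_image_of_mem _ hp, hpK⟩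

theorem isCoarseMap_eval_s15 {J : Type*} {X : J → Type*} {C : ∀ j, CoarseStructure (X j)}
    {CP : CoarseStructure (∀ j, X j)} (hP : CP.ents = prodEnts C) (j : J) :
    IsCoarseMap CP (C j) (fun p : ∀ i, X i => p j) := by
  intro E hE
  rw [hP] at hE
  exact hE.2 j

theorem runit_leftSupp_mem {F : Set (Y × Y)} (hF : F ∈ CY.ents) :
    runit (leftSupp F) ∈ CY.ents := by
  refine CY.subset_mem _ (CY.comp_mem F hF _ (CY.trans_mem F hF)) _ ?_
  rintro ⟨_, b⟩ ⟨⟨q, hq, rfl⟩, rfl : q.1 = b⟩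
  exact ⟨q.2, hq, hq⟩

theorem runit_rightSupp_mem {F : Set (Y × Y)} (hF : F ∈ CY.ents) :
    runit (rightSupp F) ∈ CY.ents := by
  refine CY.subset_mem _ (CY.comp_mem _ (CY.trans_mem F hF) F hF) _ ?_
  rintro ⟨_, b⟩ ⟨⟨q, hq, rfl⟩, rfl : q.2 = b⟩
  exact ⟨q.1, hq, hq⟩

theorem LocProperFor.finite_runit_preimage {g : Y → X} {S : Set Y}
    (h : LocProperFor g (runit S)) {K : Set X} (hK : K.Finite) :
    {y ∈ S | g y ∈ K}.Finite := by
  refine ((h.2 (K ×ˢ K) (hK.prod hK)).image Prod.fst).subset ?_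
  rintro y ⟨hyS, hyK⟩
  exact ⟨(y, y), ⟨⟨hyS, rfl⟩, hyK, hyK⟩, rfl⟩

theorem IsCoarseMap.finite_fst_preimage {g : Y → X} (hg : IsCoarseMap CY CX g)
    {F : Set (Y × Y)} (hF : F ∈ CY.ents) {K : Set X} (hK : K.Finite) :
    {q ∈ F | g q.1 ∈ K}.Finite := by
  refine (CY.proper F hF _
    ((hg _ (runit_leftSupp_mem hF)).1.finite_runit_preimage hK)).1.subset ?_
  rintro q ⟨hq, hqK⟩
  exact ⟨hq, ⟨q, hq, rfl⟩, hqK⟩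

theorem IsCoarseMap.finite_snd_preimage {g : Y → X} (hg : IsCoarseMap CY CX g)
    {F : Set (Y × Y)} (hF : F ∈ CY.ents) {K : Set X} (hK : K.Finite) :
    {q ∈ F | g q.2 ∈ K}.Finite := by
  refine (CY.proper F hF _
    ((hg _ (runit_rightSupp_mem hF)).1.finite_runit_preimage hK)).2.subset ?_
  rintro q ⟨hq, hqK⟩
  exact ⟨hq, ⟨q, hq, rfl⟩, hqK⟩

theorem image_prodMap_prodImage (g : X → Z) (f f' : Y → X) (F : Set (Y × Y)) :
    Prod.map g g '' prodImage f f' F = prodImage (g ∘ f) (g ∘ f') F := by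
  rw [prodImage, prodImage, ← image_comp]
  rfl

theorem properAx_prodImage {f f' : Y → X} (hf : IsCoarseMap CY CX f)
    (hf' : IsCoarseMap CY CX f') {F : Set (Y × Y)} (hF : F ∈ CY.ents) :
    ProperAx (prodImage f f' F) := by
  intro K hK
  constructor
  · refine ((hf.finite_fst_preimage hF hK).image fun q => (f q.1, f' q.2)).subset ?_
    rintro _ ⟨⟨q, hq, rfl⟩, hqK⟩
    exact ⟨q, ⟨hq, hqK⟩, rfl⟩
  · refine ((hf'.finite_snd_preimage hF hK).image fun q => (f q.1, f' q.2)).subset ?_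
    rintro _ ⟨⟨q, hq, rfl⟩, hqK⟩
    exact ⟨q, ⟨hq, hqK⟩, rfl⟩

theorem locProperFor_prodImage {g : X → Z} {f f' : Y → X} (hgf : IsCoarseMap CY CZ (g ∘ f))
    {F : Set (Y × Y)} (hF : F ∈ CY.ents) (hclose : prodImage (g ∘ f) (g ∘ f') F ∈ CZ.ents) :
    LocProperFor g (prodImage f f' F) := by
  refine ⟨image_prodMap_prodImage g f f' F ▸ CZ.proper _ hclose, fun K hK => ?_⟩
  refine ((hgf.finite_fst_preimage hF (hK.image Prod.fst)).image
    fun q => (f q.1, f' q.2)).subset ?_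
  rintro _ ⟨⟨q, hq, rfl⟩, hqK⟩
  exact ⟨q, ⟨hq, _, hqK, rfl⟩, rfl⟩

end

theorem stmt15_general {J : Type u} {X : J → Type v}
    (C : ∀ j, CoarseStructure (X j))
    (CP : CoarseStructure (∀ j, X j)) (hP : CP.ents = prodEnts C)
    {Y : Type w} (CY : CoarseStructure Y) (f : ∀ j, Y → X j)
    (ht : IsCoarseMap CY CP (fun y j => f j y))
    (t' : Y → ∀ j, X j) (ht' : IsCoarseMap CY CP t')
    (hclose : ∀ j, Close CY (C j) ((fun p : (∀ i, X i) => p j) ∘ t') (f j)) :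
    Close CY CP t' (fun y j => f j y) := by
  intro F hF
  rw [hP]
  refine ⟨properAx_prodImage ht' ht hF, fun j => ⟨?_, ?_⟩⟩
  · exact locProperFor_prodImage ((isCoarseMap_eval_s15 hP j).comp ht') hF (hclose j F hF)
  · rw [image_prodMap_prodImage]
    exact hclose j F hF

/-- In the coarse category the product is given by the product coarse space: if
`t'` is any coarse map into the product whose compositions with the projections
are close to the given maps `f j`, then `t'` is close to the induced map. -/
theorem stmt15 {J : Type u} [Nonempty J] {X : J → Type v}
    (C : ∀ j, CoarseStructure (X j))
    (CP : CoarseStructure (∀ j, X j)) (hP : CP.ents = prodEnts C)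
    {Y : Type w} (CY : CoarseStructure Y) (f : ∀ j, Y → X j)
    (hf : ∀ j, IsCoarseMap CY (C j) (f j))
    (ht : IsCoarseMap CY CP (fun y j => f j y))
    (t' : Y → ∀ j, X j) (ht' : IsCoarseMap CY CP t')
    (hclose : ∀ j, Close CY (C j) ((fun p : (∀ i, X i) => p j) ∘ t') (f j)) :
    Close CY CP t' (fun y j => f j y) :=
  stmt15_general C CP hP CY f ht t' ht' hclose
end

section
/- Let f, f' : Y → X be coarse maps between coarse spaces. Define Eq := {y ∈ Y : {(f y, f' y)} is an entourage of X} and equip Eq with the collection 𝓔_Eq of all F ⊆ Eq × Eq such that F is an entourage of Y and (f × f')(F) := {(f y, f' y') : (y, y') ∈ F} is an entourage of X. Then: (a) 𝓔_Eq is a coarse structure on Eq and the inclusion ι : Eq → Y is a coarse map; (b) for every coarse space Z and every coarse map g : Z → Y such that f ∘ g is close to f' ∘ g, the image of g is contained in Eq, and the corestriction g̃ : Z → Eq (equal to g as a set map) is a coarse map with ι ∘ g̃ = g; (c) any coarse map g̃' : Z → Eq with ι ∘ g̃' close to g is close to g̃. (Hence Eq is the equalizer of the closeness classes of f and f' in the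 coarse category.) -/
open Set

universe u v w

/-- The underlying set of the equalizer of `f` and `f'`: points `y` with `f y`
connected to `f' y`. -/
abbrev EqSet {Y : Type u} {X : Type v} (CX : CoarseStructure X) (f f' : Y → X) : Type u :=
  {y : Y // ({(f y, f' y)} : Set (X × X)) ∈ CX.ents}

/-!
Each closure property of the equalizer structure comes from a factorisation of pairs in
`X × X`. For `(a, b) ∈ E`, `(b, c) ∈ E'` the pair `(f a, f' c)` factors through `f' b`,
so `(f × f')(E ∘ E') ⊆ (f × f')(E) ∘ (f' × f')(E')`; the swapped pair `(f' a, f b)` is reached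
via `f' b` and `f a`, so the transpose is controlled by `f' × f'`, `(f × f')ᵀ` and `f × f`. For
uniqueness, `(f (a z), f' (b z'))` factors as `(f (a z), f' (a z'))`, an `(f × f')`-image of an
entourage because `a` is coarse, followed by `(f' (a z'), f' (b z'))`, which comes from the
diagonal over the right support of `F`; that diagonal lies in `Fᵀ ∘ F`, so the closeness of
`a` and `b` in `Y`, pushed forward by the bornologous map `f'`, applies. Properness is pulled
back along the injective inclusion.
-/

lemma ProperAx.of_image_injective {α : Type u} {β : Type v} {h : α → β}
    (hi : Function.Injective h) {E : Set (α × α)} (hE : ProperAx (Prod.map h h '' E)) :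
    ProperAx E := by
  intro K hK
  have hinj := hi.prodMap hi
  obtain ⟨h₁, h₂⟩ := hE (h '' K) (hK.image h)
  constructor
  · refine Finite.of_finite_image (h₁.subset ?_) hinj.injOn
    rintro _ ⟨p, ⟨hpE, hpK⟩, rfl⟩
    exact ⟨mem_image_of_mem _ hpE, mem_image_of_mem h hpK⟩
  · refine Finite.of_finite_image (h₂.subset ?_) hinj.injOn
    rintro _ ⟨p, ⟨hpE, hpK⟩, rfl⟩
    exact ⟨mem_image_of_mem _ hpE, mem_image_of_mem h hpK⟩

lemma LocProperFor.of_injective {α : Type u} {β : Type v} {h : α → β}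
    (hi : Function.Injective h) {F : Set (α × α)} (hF : ProperAx (Prod.map h h '' F)) :
    LocProperFor h F :=
  ⟨hF, fun _ hK => (hK.preimage (hi.prodMap hi).injOn).subset fun _ hp => hp.2⟩

lemma LocProperFor.of_comp_injective {Z : Type w} {α : Type u} {β : Type v} {h : Z → α}
    {ι : α → β} (hι : Function.Injective ι) {F : Set (Z × Z)}
    (hF : LocProperFor (ι ∘ h) F) : LocProperFor h F := by
  refine ⟨ProperAx.of_image_injective hι ?_, fun K hK => ?_⟩
  · rw [image_image]
    exact hF.1
  · refine (hF.2 (Prod.map ι ι '' K) (hK.image _)).subset ?_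
    rintro p ⟨hpF, hpK⟩
    exact ⟨hpF, mem_image_of_mem _ hpK⟩

section Relations

variable {Z : Type w} {Y : Type u} {X : Type v}

lemma image_prodMap_eq_prodImage (h h' : Z → X) (E : Set (Z × Z)) :
    Prod.map h h' '' E = prodImage h h' E :=
  rfl

lemma prodImage_prodImage (h h' : Y → X) (u v : Z → Y) (F : Set (Z × Z)) :
    prodImage h h' (prodImage u v F) = prodImage (h ∘ u) (h' ∘ v) F := by
  rw [prodImage, prodImage, image_image]
  rfl

lemma prodImage_rcomp_subset (u v w : Z → X) (E E' : Set (Z × Z)) :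
    prodImage u w (rcomp E E') ⊆ rcomp (prodImage u v E) (prodImage v w E') := by
  rintro _ ⟨⟨a, c⟩, ⟨b, hab, hbc⟩, rfl⟩
  exact ⟨v b, ⟨(a, b), hab, rfl⟩, ⟨(b, c), hbc, rfl⟩⟩

lemma prodImage_rtrans (u v : Z → X) (E : Set (Z × Z)) :
    prodImage u v (rtrans E) = rtrans (prodImage v u E) := by
  ext ⟨x, y⟩
  constructor
  · rintro ⟨⟨a, b⟩, hab, hx⟩
    exact ⟨(b, a), hab, by simp_all⟩
  · rintro ⟨⟨a, b⟩, hab, hx⟩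
    exact ⟨(b, a), hab, by simp_all⟩

lemma prodImage_swap_subset (u v : Z → X) (E : Set (Z × Z)) :
    prodImage v u E ⊆
      rcomp (prodImage v v E) (rcomp (rtrans (prodImage u v E)) (prodImage u u E)) := by
  rintro _ ⟨⟨a, b⟩, hab, rfl⟩
  exact ⟨v b, ⟨(a, b), hab, rfl⟩, u a, ⟨(a, b), hab, rfl⟩, ⟨(a, b), hab, rfl⟩⟩

lemma prodImage_subset_rcomp_rtrans (u v w : Z → X) (F : Set (Z × Z)) :
    prodImage u w F ⊆ rcomp (prodImage u v F) (prodImage v w (rcomp (rtrans F) F)) := by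
  rintro _ ⟨⟨a, b⟩, hab, rfl⟩
  exact ⟨v b, ⟨(a, b), hab, rfl⟩, ⟨(b, b), ⟨a, hab, hab⟩, rfl⟩⟩

end Relations

def IsBornologous {Y : Type u} {X : Type v} (CY : CoarseStructure Y) (CX : CoarseStructure X)
    (f : Y → X) : Prop :=
  ∀ F ∈ CY.ents, Prod.map f f '' F ∈ CX.ents

lemma IsCoarseMap.isBornologous {Y : Type u} {X : Type v} {CY : CoarseStructure Y}
    {CX : CoarseStructure X} {f : Y → X} (hf : IsCoarseMap CY CX f) : IsBornologous CY CX f :=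
  fun F hF => (hf F hF).2

lemma Close.singleton_mem {Z : Type w} {X : Type v} {CZ : CoarseStructure Z}
    {CX : CoarseStructure X} {u v : Z → X} (h : Close CZ CX u v) (z : Z) :
    ({(u z, v z)} : Set (X × X)) ∈ CX.ents := by
  simpa only [prodImage, image_singleton] using h _ (CZ.singleton_mem z)

section Equalizer

variable {Y : Type u} {X : Type v} (CY : CoarseStructure Y) (CX : CoarseStructure X)
  {f f' : Y → X}

def equalizerStructure (hf : IsBornologous CY CX f) (hf' : IsBornologous CY CX f') :
    CoarseStructure (EqSet CX f f') where
  ents := {F | Prod.map Subtype.val Subtype.val '' F ∈ CY.ents ∧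
    prodImage (f ∘ Subtype.val) (f' ∘ Subtype.val) F ∈ CX.ents}
  proper E hE := ProperAx.of_image_injective Subtype.val_injective (CY.proper _ hE.1)
  union_mem E hE E' hE' := by
    refine ⟨?_, ?_⟩
    · rw [image_union]
      exact CY.union_mem _ hE.1 _ hE'.1
    · rw [prodImage, image_union]
      exact CX.union_mem _ hE.2 _ hE'.2
  comp_mem E hE E' hE' := by
    refine ⟨CY.subset_mem _ (CY.comp_mem _ hE.1 _ hE'.1) _ (prodImage_rcomp_subset _ _ _ E E'),
      CX.subset_mem _ (CX.comp_mem _ hE.2 _ ?_) _ (prodImage_rcomp_subset _ _ _ E E')⟩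
    have := hf' _ hE'.1
    rwa [image_prodMap_eq_prodImage, image_prodMap_eq_prodImage, prodImage_prodImage] at this
  trans_mem E hE := by
    refine ⟨?_, ?_⟩
    · rw [image_prodMap_eq_prodImage, prodImage_rtrans]
      exact CY.trans_mem _ hE.1
    · rw [prodImage_rtrans]
      refine CX.trans_mem _ (CX.subset_mem _ ?_ _ (prodImage_swap_subset _ _ E))
      have hff := hf _ hE.1
      have hff' := hf' _ hE.1
      simp only [image_prodMap_eq_prodImage, prodImage_prodImage] at hff hff'
      exact CX.comp_mem _ hff' _ (CX.comp_mem _ (CX.trans_mem _ hE.2) _ hff)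
  subset_mem E hE E' hE' :=
    ⟨CY.subset_mem _ hE.1 _ (image_mono hE'), CX.subset_mem _ hE.2 _ (image_mono hE')⟩
  singleton_mem x := by
    refine ⟨?_, ?_⟩
    · rw [image_singleton]
      exact CY.singleton_mem x.val
    · rw [prodImage, image_singleton]
      exact x.2

variable {CX CY} {hf : IsBornologous CY CX f} {hf' : IsBornologous CY CX f'}

lemma isCoarseMap_val_equalizerStructure :
    IsCoarseMap (equalizerStructure CY CX hf hf') CY Subtype.val :=
  fun _ hF => ⟨LocProperFor.of_injective Subtype.val_injective (CY.proper _ hF.1), hF.1⟩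

lemma isCoarseMap_codRestrict_equalizerStructure {Z : Type w} {CZ : CoarseStructure Z}
    {g : Z → Y} (hg : IsCoarseMap CZ CY g) (hclose : Close CZ CX (f ∘ g) (f' ∘ g)) :
    IsCoarseMap CZ (equalizerStructure CY CX hf hf')
      (fun z => (⟨g z, hclose.singleton_mem z⟩ : EqSet CX f f')) := by
  intro F hF
  refine ⟨LocProperFor.of_comp_injective Subtype.val_injective (hg F hF).1, ?_, ?_⟩
  · simp only [image_prodMap_eq_prodImage, prodImage_prodImage]
    exact (hg F hF).2
  · rw [image_prodMap_eq_prodImage, prodImage_prodImage]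
    exact hclose F hF

lemma close_equalizerStructure_of_close_val {Z : Type w} {CZ : CoarseStructure Z}
    {a b : Z → EqSet CX f f'} (ha : IsBornologous CZ (equalizerStructure CY CX hf hf') a)
    (hab : Close CZ CY (Subtype.val ∘ a) (Subtype.val ∘ b)) :
    Close CZ (equalizerStructure CY CX hf hf') a b := by
  intro F hF
  refine ⟨?_, ?_⟩
  · rw [image_prodMap_eq_prodImage, prodImage_prodImage]
    exact hab F hF
  · have hΔ : rcomp (rtrans F) F ∈ CZ.ents := CZ.comp_mem _ (CZ.trans_mem _ hF) _ hF
    have hstep := hf' _ (hab _ hΔ)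
    have hdiag := (ha F hF).2
    rw [image_prodMap_eq_prodImage, prodImage_prodImage] at hstep hdiag
    rw [prodImage_prodImage]
    exact CX.subset_mem _ (CX.comp_mem _ hdiag _ hstep) _
      (prodImage_subset_rcomp_rtrans _ _ _ F)

end Equalizer

/-- The equalizer of close classes of coarse maps in the coarse category: (a) the
described collection is a coarse structure on `EqSet` and the inclusion is coarse;
(b) any coarse `g` with `f ∘ g` close to `f' ∘ g` lands in `EqSet` and corestricts
to a coarse map; (c) the corestriction is unique up to closeness. -/
theorem stmt16 {Y : Type u} {X : Type v} (CY : CoarseStructure Y) (CX : CoarseStructure X)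
    (f f' : Y → X) (hf : IsCoarseMap CY CX f) (hf' : IsCoarseMap CY CX f') :
    ∃ CE : CoarseStructure (EqSet CX f f'),
      CE.ents = {F : Set (EqSet CX f f' × EqSet CX f f') |
          (Prod.map (Subtype.val) (Subtype.val) '' F) ∈ CY.ents ∧
          ((fun p : EqSet CX f f' × EqSet CX f f' => (f p.1.val, f' p.2.val)) '' F)
            ∈ CX.ents} ∧
      IsCoarseMap CE CY (Subtype.val) ∧
      ∀ (Z : Type w) (CZ : CoarseStructure Z) (g : Z → Y),
        IsCoarseMap CZ CY g → Close CZ CX (f ∘ g) (f' ∘ g) →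
          ∃ hmem : ∀ z, ({(f (g z), f' (g z))} : Set (X × X)) ∈ CX.ents,
            IsCoarseMap CZ CE (fun z => ⟨g z, hmem z⟩) ∧
            (Subtype.val ∘ (fun z => (⟨g z, hmem z⟩ : EqSet CX f f')) = g) ∧
            ∀ g' : Z → EqSet CX f f', IsCoarseMap CZ CE g' →
              Close CZ CY (Subtype.val ∘ g') g →
              Close CZ CE g' (fun z => ⟨g z, hmem z⟩) := by
  refine ⟨equalizerStructure CY CX hf.isBornologous hf'.isBornologous, rfl,
    isCoarseMap_val_equalizerStructure, fun Z CZ g hg hclose => ?_⟩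
  exact ⟨hclose.singleton_mem, isCoarseMap_codRestrict_equalizerStructure hg hclose, rfl,
    fun g' hg' hclose' => close_equalizerStructure_of_close_val hg'.isBornologous hclose'⟩
end

section
/- Let f, f' : Y → X be close coarse maps between coarse spaces. Then the coarsely invariant pull-backs agree: 𝓔_{Terminate(Y)} ∩ f*𝓔_X = 𝓔_{Terminate(Y)} ∩ f'*𝓔_X, where f*𝓔_X denotes the pull-back coarse structure along f. -/
open Set

universe u v w

/-- The coarse structure of `Terminate(Y)`: sets satisfying the properness axiom
whose left and right supports are unital subspaces of `Y`. -/
def TerminateEnts {Y : Type u} (CY : CoarseStructure Y) : Set (Set (Y × Y)) :=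
  {F | ProperAx F ∧ runit (leftSupp F) ∈ CY.ents ∧ runit (rightSupp F) ∈ CY.ents}

/-- The pull-back coarse structure along `f`. -/
def pullbackEnts {Y : Type u} {X : Type v} (f : Y → X) (CX : CoarseStructure X) :
    Set (Set (Y × Y)) :=
  {F | ProperAx F ∧ LocProperFor f F ∧ Prod.map f f '' F ∈ CX.ents}

/-! If `F` has unital supports `L = 1_{F·Y}` and `R = 1_{Y·F}`, then
`(f' × f')(F) ⊆ (f × f')(L)ᵀ ∘ (f × f)(F) ∘ (f × f')(R)`, an entourage by closeness. Local
properness transfers the same way: closeness on `L` makes `f'`-bounded points of `F·Y`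
`f`-bounded, and there `f` is locally proper. -/

section

variable {Y : Type u} {X : Type v}

theorem prodImage_eq_rtrans (f f' : Y → X) (F : Set (Y × Y)) :
    prodImage f' f F = rtrans (prodImage f f' (rtrans F)) := by
  ext ⟨a, b⟩
  constructor
  · rintro ⟨⟨y, y'⟩, hy, h⟩
    exact ⟨(y', y), hy, by simpa [Prod.ext_iff, and_comm] using h⟩
  · rintro ⟨⟨y', y⟩, hy, h⟩
    exact ⟨(y, y'), hy, by simpa [Prod.ext_iff, and_comm] using h⟩

theorem Close.symm {CY : CoarseStructure Y} {CX : CoarseStructure X} {f f' : Y → X}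
    (h : Close CY CX f f') : Close CY CX f' f := fun F hF => by
  rw [prodImage_eq_rtrans]
  exact CX.trans_mem _ (h _ (CY.trans_mem F hF))

theorem image_prodMap_subset_rcomp (f f' : Y → X) (F : Set (Y × Y)) :
    Prod.map f' f' '' F ⊆ rcomp (rtrans (prodImage f f' (runit (leftSupp F))))
      (rcomp (Prod.map f f '' F) (prodImage f f' (runit (rightSupp F)))) := by
  rintro _ ⟨q, hq, rfl⟩
  exact ⟨f q.1, ⟨(q.1, q.1), ⟨⟨q, hq, rfl⟩, rfl⟩, rfl⟩,
    f q.2, ⟨q, hq, rfl⟩, ⟨(q.2, q.2), ⟨⟨q, hq, rfl⟩, rfl⟩, rfl⟩⟩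

theorem LocProperFor.finite_fst_mem {f : Y → X} {F : Set (Y × Y)} (hf : LocProperFor f F)
    {A : Set X} (hA : A.Finite) : {p ∈ F | f p.1 ∈ A}.Finite := by
  refine (hf.2 _ (hf.1 A hA).1).subset ?_
  rintro p ⟨hp, hpA⟩
  exact ⟨hp, ⟨p, hp, rfl⟩, hpA⟩

theorem ProperAx.finite_image_prodImage_runit {f f' : Y → X} {S : Set Y}
    (h : ProperAx (prodImage f f' (runit S))) {K : Set X} (hK : K.Finite) :
    (f '' {y ∈ S | f' y ∈ K}).Finite := by
  refine ((h K hK).2.image Prod.fst).subset ?_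
  rintro _ ⟨y, ⟨hy, hyK⟩, rfl⟩
  exact ⟨(f y, f' y), ⟨⟨(y, y), ⟨hy, rfl⟩, rfl⟩, hyK⟩, rfl⟩

variable {CY : CoarseStructure Y} {CX : CoarseStructure X} {f f' : Y → X}

theorem locProperFor_of_close (hclose : Close CY CX f f') {F : Set (Y × Y)}
    (hL : runit (leftSupp F) ∈ CY.ents) (hf : LocProperFor f F)
    (hF' : Prod.map f' f' '' F ∈ CX.ents) : LocProperFor f' F := by
  refine ⟨CX.proper _ hF', fun K hK => ?_⟩
  have hA := ProperAx.finite_image_prodImage_runit (CX.proper _ (hclose _ hL)) (hK.image Prod.fst)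
  refine (LocProperFor.finite_fst_mem hf hA).subset ?_
  rintro p ⟨hp, hpK⟩
  exact ⟨hp, p.1, ⟨⟨p, hp, rfl⟩, _, hpK, rfl⟩, rfl⟩

theorem mem_pullbackEnts_of_close (hclose : Close CY CX f f') {F : Set (Y × Y)}
    (hT : F ∈ TerminateEnts CY) (hP : F ∈ pullbackEnts f CX) : F ∈ pullbackEnts f' CX := by
  obtain ⟨hProper, hL, hR⟩ := hT
  obtain ⟨-, hf, hfF⟩ := hP
  have hf'F : Prod.map f' f' '' F ∈ CX.ents :=
    CX.subset_mem _ (CX.comp_mem _ (CX.trans_mem _ (hclose _ hL)) _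
      (CX.comp_mem _ hfF _ (hclose _ hR))) _ (image_prodMap_subset_rcomp f f' F)
  exact ⟨hProper, locProperFor_of_close hclose hL hf hf'F, hf'F⟩

end

theorem stmt17_general {Y : Type u} {X : Type v} (CY : CoarseStructure Y) (CX : CoarseStructure X)
    (f f' : Y → X)
    (hclose : Close CY CX f f') :
    TerminateEnts CY ∩ pullbackEnts f CX = TerminateEnts CY ∩ pullbackEnts f' CX := by
  ext F
  exact ⟨fun ⟨hT, hP⟩ => ⟨hT, mem_pullbackEnts_of_close hclose hT hP⟩,
    fun ⟨hT, hP⟩ => ⟨hT, mem_pullbackEnts_of_close hclose.symm hT hP⟩⟩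

/-- Close coarse maps have the same coarsely invariant pull-back coarse structure. -/
theorem stmt17 {Y : Type u} {X : Type v} (CY : CoarseStructure Y) (CX : CoarseStructure X)
    (f f' : Y → X) (hf : IsCoarseMap CY CX f) (hf' : IsCoarseMap CY CX f')
    (hclose : Close CY CX f f') :
    TerminateEnts CY ∩ pullbackEnts f CX = TerminateEnts CY ∩ pullbackEnts f' CX :=
  stmt17_general CY CX f f' hclose
end
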